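/- arXiv:2501.18879 — 4 statements merged into one kernel-verified Lean document; each statement's English description precedes it below -/
import Mathlib

section
/- For all real numbers R > 0 and c ≥ e (Euler's number), ∫₀^{2R} √(log(2Rc/ε)) dε ≤ 2R√(log c) + R. -/
open MeasureTheory Real Set

/-! Write `log (2Rc/ε) = log c + s` with `s = log (2R) - log ε ≥ 0`. Concavity of `√` gives
`√(log c + s) ≤ √(log c) + s / (2√(log c)) ≤ √(log c) + s / 2`, since `log c ≥ 1`, and
`∫₀^{2R} (log (2R) - log ε) dε = 2R`. -/

lemma Real.sqrt_add_le_sqrt_add_half {a s : ℝ} (ha : 1 ≤ a) (hs : 0 ≤ s) :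
    √(a + s) ≤ √a + s / 2 := by
  have h1 : 1 ≤ √a := one_le_sqrt.mpr ha
  have h2 : √a ^ 2 = a := sq_sqrt (by linarith)
  rw [sqrt_le_iff]
  constructor <;> nlinarith

lemma integral_log_sub_log_eq_self (a : ℝ) : ∫ x in (0 : ℝ)..a, (log a - log x) = a := by
  rw [intervalIntegral.integral_sub intervalIntegrable_const
    intervalIntegral.intervalIntegrable_log', intervalIntegral.integral_const, integral_log]
  simp

lemma sqrt_log_mul_div_le {r c ε : ℝ} (hc : exp 1 ≤ c) (hε : ε ∈ Ioc 0 r) :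
    √(log (r * c / ε)) ≤ √(log c) + (log r - log ε) / 2 := by
  obtain ⟨hε0, hεr⟩ := hε
  have hc0 : 0 < c := (exp_pos 1).trans_le hc
  have hlog : log (r * c / ε) = log c + (log r - log ε) := by
    rw [log_div (by nlinarith) hε0.ne', log_mul (hε0.trans_le hεr).ne' hc0.ne']
    ring
  rw [hlog]
  exact sqrt_add_le_sqrt_add_half ((le_log_iff_exp_le hc0).mpr hc)
    (sub_nonneg.mpr (log_le_log hε0 hεr))

/-- For `R > 0` and `c ≥ e`,
`∫₀^{2R} √(log(2Rc/ε)) dε ≤ 2R√(log c) + R`. -/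
theorem dudley_integral_upper_bound
    (R c : ℝ) (hR : 0 < R) (hc : Real.exp 1 ≤ c) :
    (∫ ε in (0 : ℝ)..(2 * R), Real.sqrt (Real.log (2 * R * c / ε)))
      ≤ 2 * R * Real.sqrt (Real.log c) + R := by
  have h2R : (0 : ℝ) ≤ 2 * R := by linarith
  have hlog : IntervalIntegrable (fun ε => (log (2 * R) - log ε) / 2) volume 0 (2 * R) :=
    (intervalIntegrable_const.sub intervalIntegral.intervalIntegrable_log').div_const 2
  calc (∫ ε in (0 : ℝ)..(2 * R), √(log (2 * R * c / ε)))
      = ∫ ε in Ioc 0 (2 * R), √(log (2 * R * c / ε)) := intervalIntegral.integral_of_le h2R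
    _ ≤ ∫ ε in Ioc 0 (2 * R), (√(log c) + (log (2 * R) - log ε) / 2) :=
        integral_mono_of_nonneg (ae_of_all _ fun _ => sqrt_nonneg _)
          (intervalIntegrable_const.add hlog).1
          (ae_restrict_of_forall_mem measurableSet_Ioc fun _ => sqrt_log_mul_div_le hc)
    _ = ∫ ε in (0 : ℝ)..(2 * R), (√(log c) + (log (2 * R) - log ε) / 2) :=
        (intervalIntegral.integral_of_le h2R).symm
    _ = 2 * R * √(log c) + R := by
        rw [intervalIntegral.integral_add intervalIntegrable_const hlog,
          intervalIntegral.integral_div, integral_log_sub_log_eq_self,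
          intervalIntegral.integral_const, smul_eq_mul]
        ring
end

section
/- There exists a universal constant C > 0 with the following property. Let n, d, d_V be positive integers with d_V·d ≥ 3, let β ≥ 1, and let σ, M, η, R > 0 and Γ > 1. Let Φ ∈ ℝ^{n×d} be a matrix whose every row has Euclidean norm at most M, and assume (1/√n)‖Φw‖₂ ≥ √η‖w‖₂ for every w with ‖w‖₂ ≤ 2R. Let V_R be a nonempty compact subset of {w ∈ ℝ^d : ‖w‖₂ ≤ R} satisfying the covering bound: for every ε' ∈ (0, 2R] there exists a finite set N ⊆ V_R of cardinality at most 2β·(2R·d_V·d/ε')^{d_V} such that every point of V_R is within Euclidean distance ε' of some point of N. Let ε ∈ ℝ^n be a random vector with independent N(0, σ²) coordinates, and for each w* ∈ V_R let ŵ(w*) ∈ V_R be a minimizer of w ↦ ‖Φw* + ε − Φw‖₂² over V_R, chosen so that ‖ŵ(w₁) − ŵ(w₂)‖₂ ≤ (Γ − 1)‖w₁ − w₂‖₂ for all w₁, w₂ ∈ V_R. Then for every δ ∈ (0, 1), with probability at least 1 − δ, sup_{w* ∈ V_R} ‖ŵ(w*) − w*‖₂² ≤ C·η^{−1}·σ·M·Γ·R·(√(d_V·log(d_V·d)/n)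 + √(log(2β)/n) + 2√(log(2/δ)/n)). -/
/-!
Let `g = Φᵀε`. Each coordinate `g j` is centred Gaussian with variance `σ² ∑ᵢ Φᵢⱼ²`, so with
`L = log (2d/δ)` a union bound over the `d` coordinates shows that, with probability at least
`1 - δ`, `‖g‖² ≤ 2σ² ‖Φ‖_F² L ≤ 2σ² n M² L`. On this event the argument is deterministic and
uniform in `w*`: the basic inequality `‖Φu‖² ≤ 2⟪u, g⟫` for `u = ŵ(w*) - w*`, Cauchy–Schwarz,
`‖u‖ ≤ 2R` and the restricted eigenvalue condition give `η‖u‖² ≤ 4√2 σMR √(L/n)`, and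
`log d ≤ d_V log (d_V d)` turns this into the stated rate with `C = 8`.
-/

open MeasureTheory ProbabilityTheory Real Matrix
open scoped NNReal ENNReal

namespace ProbabilityTheory

variable {Ω : Type*} {mΩ : MeasurableSpace Ω} {μ : Measure Ω}

lemma hasSubgaussianMGF_of_map_eq_gaussianReal {X : Ω → ℝ} {v : ℝ≥0}
    (h : μ.map X = gaussianReal 0 v) : HasSubgaussianMGF X v μ := by
  rw [← HasSubgaussianMGF.id_map_iff (aemeasurable_of_map_neZero (by rw [h]; infer_instance)), h]
  exact ⟨integrable_exp_mul_gaussianReal, fun t ↦ by simp [mgf_id_gaussianReal]⟩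

lemma HasSubgaussianMGF.sum_mul_of_iIndepFun {ι : Type*} [Fintype ι] {X : ι → Ω → ℝ}
    (h_indep : iIndepFun X μ) {c : ι → ℝ≥0} (h_subG : ∀ i, HasSubgaussianMGF (X i) (c i) μ)
    (a : ι → ℝ) :
    HasSubgaussianMGF (fun ω ↦ ∑ i, a i * X i ω) (∑ i, (a i ^ 2).toNNReal * c i) μ := by
  refine HasSubgaussianMGF.sum_of_iIndepFun
    (h_indep.comp (fun i x ↦ a i * x) fun _ ↦ measurable_const.mul measurable_id)
    fun i _ ↦ ?_
  rw [Real.toNNReal_of_nonneg (sq_nonneg _)]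
  exact (h_subG i).const_mul (a i)

lemma HasSubgaussianMGF.measure_lt_sq_le [IsFiniteMeasure μ] {X : Ω → ℝ} {c : ℝ≥0}
    (h : HasSubgaussianMGF X c μ) {L : ℝ} (hL : 0 ≤ L) :
    μ {ω | 2 * c * L < X ω ^ 2} ≤ ENNReal.ofReal (2 * exp (-L)) := by
  rcases eq_zero_or_pos c with rfl | hc
  · refine (measure_eq_zero_iff_ae_notMem.2 ?_).le.trans zero_le
    filter_upwards [h.ae_eq_zero_of_hasSubgaussianMGF_zero] with ω hω
    simp [hω]
  set τ := √(2 * c * L)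
  have hτ : τ ^ 2 / (2 * c) = L := by
    rw [sq_sqrt (by positivity)]; field_simp
  have hsub : {ω | 2 * c * L < X ω ^ 2} ⊆ {ω | τ ≤ X ω} ∪ {ω | τ ≤ (-X) ω} := by
    intro ω hω
    have : τ < |X ω| := by
      rw [← sqrt_sq_eq_abs]; exact sqrt_lt_sqrt (by positivity) hω
    rcases lt_abs.1 this with h | h
    · exact Or.inl h.le
    · exact Or.inr h.le
  have tail : ∀ {Y : Ω → ℝ}, HasSubgaussianMGF Y c μ →
      μ {ω | τ ≤ Y ω} ≤ ENNReal.ofReal (exp (-L)) := fun hY ↦ by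
    rw [← ofReal_measureReal, ← hτ, ← neg_div]
    exact ENNReal.ofReal_le_ofReal (hY.measure_ge_le (sqrt_nonneg _))
  calc μ {ω | 2 * c * L < X ω ^ 2}
      ≤ μ {ω | τ ≤ X ω} + μ {ω | τ ≤ (-X) ω} :=
        (measure_mono hsub).trans (measure_union_le _ _)
    _ ≤ ENNReal.ofReal (exp (-L)) + ENNReal.ofReal (exp (-L)) :=
        add_le_add (tail h) (tail h.neg)
    _ = ENNReal.ofReal (2 * exp (-L)) := by
        rw [← ENNReal.ofReal_add (by positivity) (by positivity)]
        ring_nf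

lemma ofReal_one_sub_le_measure_forall_sq_le [IsProbabilityMeasure μ] {κ : Type*} [Fintype κ]
    {X : κ → Ω → ℝ} {c : κ → ℝ≥0} (h : ∀ j, HasSubgaussianMGF (X j) (c j) μ) {L : ℝ}
    (hL : 0 ≤ L) :
    ENNReal.ofReal (1 - 2 * Fintype.card κ * exp (-L))
      ≤ μ {ω | ∀ j, X j ω ^ 2 ≤ 2 * c j * L} := by
  set S := {ω | ∀ j, X j ω ^ 2 ≤ 2 * c j * L}
  have hSc : μ Sᶜ ≤ ENNReal.ofReal (2 * Fintype.card κ * exp (-L)) := by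
    have : Sᶜ = ⋃ j, {ω | 2 * c j * L < X j ω ^ 2} := by ext; simp [S]
    calc μ Sᶜ ≤ ∑ j, μ {ω | 2 * c j * L < X j ω ^ 2} := this ▸ measure_iUnion_fintype_le _ _
      _ ≤ ∑ _j : κ, ENNReal.ofReal (2 * exp (-L)) :=
          Finset.sum_le_sum fun j _ ↦ (h j).measure_lt_sq_le hL
      _ = ENNReal.ofReal (2 * Fintype.card κ * exp (-L)) := by
          rw [Finset.sum_const, Finset.card_univ, nsmul_eq_mul, ← ENNReal.ofReal_natCast,
            ← ENNReal.ofReal_mul (by positivity)]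
          ring_nf
  rw [ENNReal.ofReal_sub _ (by positivity), ENNReal.ofReal_one]
  calc 1 - ENNReal.ofReal (2 * Fintype.card κ * exp (-L)) ≤ 1 - μ Sᶜ := tsub_le_tsub_left hSc _
    _ ≤ μ S := by
        rw [tsub_le_iff_right, ← measure_univ (μ := μ)]
        exact measure_univ_le_add_compl S

lemma ofReal_one_sub_le_measure_sum_sq_le_of_gaussian [IsProbabilityMeasure μ]
    {ι κ : Type*} [Fintype ι] [Fintype κ] {ε : ι → Ω → ℝ} (h_indep : iIndepFun ε μ) {v : ℝ≥0}
    (h_gauss : ∀ i, μ.map (ε i) = gaussianReal 0 v) (A : Matrix ι κ ℝ) {L : ℝ} (hL : 0 ≤ L) :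
    ENNReal.ofReal (1 - 2 * Fintype.card κ * exp (-L))
      ≤ μ {ω | ∑ j, (∑ i, A i j * ε i ω) ^ 2 ≤ 2 * v * (∑ i, ∑ j, A i j ^ 2) * L} := by
  refine (ofReal_one_sub_le_measure_forall_sq_le (fun j ↦ HasSubgaussianMGF.sum_mul_of_iIndepFun
    h_indep (fun i ↦ hasSubgaussianMGF_of_map_eq_gaussianReal (h_gauss i)) (A · j)) hL).trans
    (measure_mono fun ω hω ↦ ?_)
  simp only [Set.mem_ofPred_eq, NNReal.coe_sum, NNReal.coe_mul,
    Real.coe_toNNReal _ (sq_nonneg _)] at hω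
  calc ∑ j, (∑ i, A i j * ε i ω) ^ 2 ≤ ∑ j, 2 * (∑ i, A i j ^ 2 * v) * L :=
        Finset.sum_le_sum fun j _ ↦ hω j
    _ = 2 * v * (∑ i, ∑ j, A i j ^ 2) * L := by
        simp only [Finset.mul_sum, Finset.sum_mul]
        rw [Finset.sum_comm]
        exact Finset.sum_congr rfl fun i _ ↦ Finset.sum_congr rfl fun j _ ↦ by ring

end ProbabilityTheory

lemma Real.sqrt_add_le_add_sqrt {x y : ℝ} (hx : 0 ≤ x) (hy : 0 ≤ y) : √(x + y) ≤ √x + √y := by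
  rw [sqrt_le_left (by positivity)]
  nlinarith [sq_sqrt hx, sq_sqrt hy, sqrt_nonneg x, sqrt_nonneg y]

section LeastSquares

variable {ι κ : Type*} [Fintype ι] [Fintype κ]

lemma sqrt_sum_sq_sub_le (a b : κ → ℝ) :
    √(∑ j, (a j - b j) ^ 2) ≤ √(∑ j, a j ^ 2) + √(∑ j, b j ^ 2) := by
  have h (x : κ → ℝ) : √(∑ j, x j ^ 2) = ‖WithLp.toLp 2 x‖ := by
    simp [EuclideanSpace.norm_eq, Real.norm_eq_abs, sq_abs]
  rw [h, h, h]
  exact norm_sub_le (WithLp.toLp 2 a) (WithLp.toLp 2 b)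

lemma sum_sum_sq_le_of_sqrt_sum_sq_le (A : Matrix ι κ ℝ) {M : ℝ}
    (h : ∀ i, √(∑ j, A i j ^ 2) ≤ M) : ∑ i, ∑ j, A i j ^ 2 ≤ Fintype.card ι * M ^ 2 := by
  have hrow (i : ι) : ∑ j, A i j ^ 2 ≤ M ^ 2 :=
    (sqrt_le_left ((sqrt_nonneg _).trans (h i))).1 (h i)
  simpa using Finset.sum_le_sum fun i (_ : i ∈ Finset.univ) ↦ hrow i

/-- The basic inequality of least squares. -/
lemma sum_sq_mulVec_sub_le_of_le (Φ : Matrix ι κ ℝ) {w₀ w : κ → ℝ} {e : ι → ℝ}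
    (h : ∑ i, ((Φ *ᵥ w₀) i + e i - (Φ *ᵥ w) i) ^ 2
      ≤ ∑ i, ((Φ *ᵥ w₀) i + e i - (Φ *ᵥ w₀) i) ^ 2) :
    ∑ i, (Φ *ᵥ (w - w₀)) i ^ 2 ≤ 2 * ∑ j, (w - w₀) j * ∑ i, Φ i j * e i := by
  set t := Φ *ᵥ (w - w₀)
  have hres (i : ι) : (Φ *ᵥ w₀) i + e i - (Φ *ᵥ w) i = e i - t i := by
    simp only [t, Matrix.mulVec_sub, Pi.sub_apply]; ring
  have hcross : ∑ i, e i * t i = ∑ j, (w - w₀) j * ∑ i, Φ i j * e i := by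
    simp only [t, Matrix.mulVec, dotProduct, Finset.mul_sum]
    rw [Finset.sum_comm]
    exact Finset.sum_congr rfl fun j _ ↦ Finset.sum_congr rfl fun i _ ↦ by ring
  have hexpand : ∑ i, (e i - t i) ^ 2 = ∑ i, e i ^ 2 - 2 * ∑ i, e i * t i + ∑ i, t i ^ 2 := by
    simp only [sub_sq, Finset.sum_add_distrib, Finset.sum_sub_distrib, Finset.mul_sum]
    ring_nf
  simp only [hres, add_sub_cancel_left, hexpand] at h
  linarith

lemma sum_sq_le_of_basic_inequality (Φ : Matrix ι κ ℝ) {u : κ → ℝ} {e : ι → ℝ} {η N R G : ℝ}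
    (hη : 0 < η) (hN : 0 < N)
    (hRE : √η * √(∑ j, u j ^ 2) ≤ 1 / √N * √(∑ i, (Φ *ᵥ u) i ^ 2))
    (hbasic : ∑ i, (Φ *ᵥ u) i ^ 2 ≤ 2 * ∑ j, u j * ∑ i, Φ i j * e i)
    (hu : √(∑ j, u j ^ 2) ≤ 2 * R) (hG : √(∑ j, (∑ i, Φ i j * e i) ^ 2) ≤ G) :
    ∑ j, u j ^ 2 ≤ 4 * R * G / (η * N) := by
  have hRE' : η * ∑ j, u j ^ 2 ≤ (∑ i, (Φ *ᵥ u) i ^ 2) / N := by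
    have := pow_le_pow_left₀ (by positivity) hRE 2
    rwa [mul_pow, mul_pow, div_pow, one_pow, sq_sqrt hη.le, sq_sqrt hN.le,
      sq_sqrt (by positivity), sq_sqrt (by positivity), one_div_mul_eq_div] at this
  have hcorr : ∑ j, u j * ∑ i, Φ i j * e i ≤ 2 * R * G :=
    (Real.sum_mul_le_sqrt_mul_sqrt _ _ _).trans
      (mul_le_mul hu hG (sqrt_nonneg _) ((sqrt_nonneg _).trans hu))
  rw [le_div_iff₀ (by positivity)]
  rw [le_div_iff₀ hN] at hRE'
  linarith

end LeastSquares

lemma sqrt_log_two_mul_div_le {d dV : ℕ} (hd : 0 < d) (hdV : 0 < dV) {δ : ℝ} (hδ : 0 < δ)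
    (hδ2 : δ ≤ 2) :
    √(log (2 * d / δ)) ≤ √(dV * log (dV * d)) + √(log (2 / δ)) := by
  have hd1 : (1 : ℝ) ≤ d := by exact_mod_cast hd
  have hdV1 : (1 : ℝ) ≤ dV := by exact_mod_cast hdV
  have hlog_d : log d ≤ dV * log (dV * d) := by
    have h1 : log d ≤ log (dV * d) :=
      log_le_log (by positivity) (le_mul_of_one_le_left (by positivity) hdV1)
    exact h1.trans (le_mul_of_one_le_left ((log_nonneg hd1).trans h1) hdV1)
  rw [mul_div_right_comm, mul_comm, log_mul (by positivity) (by positivity)]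
  refine (sqrt_add_le_add_sqrt (log_nonneg hd1)
    (log_nonneg (by rw [le_div_iff₀ hδ]; linarith))).trans ?_
  gcongr

lemma four_mul_sqrt_div_le {η σ M R Γ N L A B C : ℝ} (hη : 0 < η) (hσ : 0 ≤ σ) (hM : 0 ≤ M)
    (hR : 0 ≤ R) (hΓ : 1 ≤ Γ) (hN : 0 < N) (hA : 0 ≤ A) (hB : 0 ≤ B) (hC : 0 ≤ C)
    (hL : √L ≤ √A + √B) :
    4 * R * √(2 * σ ^ 2 * (N * M ^ 2) * L) / (η * N)
      ≤ 8 * η⁻¹ * σ * M * Γ * R * (√(A / N) + √(C / N) + 2 * √(B / N)) := by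
  obtain ⟨s, hs, rfl⟩ : ∃ s > 0, N = s ^ 2 := ⟨√N, sqrt_pos.2 hN, (sq_sqrt hN.le).symm⟩
  have hsqrt2 : √2 ≤ 2 := by
    rw [sqrt_le_left zero_le_two]; norm_num
  have key : 4 * (√2 * √L) ≤ 8 * (Γ * (√A + √C + 2 * √B)) := by
    have : √A + √B ≤ Γ * (√A + √C + 2 * √B) := by
      nlinarith [sqrt_nonneg A, sqrt_nonneg B, sqrt_nonneg C]
    nlinarith [sqrt_nonneg 2, sqrt_nonneg L]
  rw [sqrt_div hA, sqrt_div hB, sqrt_div hC, sqrt_sq hs.le,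
    show 2 * σ ^ 2 * (s ^ 2 * M ^ 2) * L = (σ * M * s) ^ 2 * (2 * L) by ring,
    sqrt_mul (sq_nonneg _), sqrt_sq (by positivity), sqrt_mul zero_le_two]
  calc 4 * R * (σ * M * s * (√2 * √L)) / (η * s ^ 2)
      = σ * M * R / (η * s) * (4 * (√2 * √L)) := by field_simp
    _ ≤ σ * M * R / (η * s) * (8 * (Γ * (√A + √C + 2 * √B))) := by gcongr
    _ = 8 * η⁻¹ * σ * M * Γ * R * (√A / s + √C / s + 2 * (√B / s)) := by field_simp

/-- Minimax risk bound for physics-informed linear regression: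
there is a universal constant `C > 0` such that, under a row bound `M` on `Φ`, a
restricted-eigenvalue condition with constant `η`, a `(β, d_V)`-type covering bound
for the compact feasible set `V_R ⊆ B₂(R)`, i.i.d. `N(0,σ²)` noise, and a
`(Γ−1)`-stable family of constrained least-squares estimators `ŵ(·)`, for every
`δ ∈ (0,1)`, with probability at least `1 − δ`,
`sup_{w* ∈ V_R} ‖ŵ(w*) − w*‖₂² ≤ C·η⁻¹·σ·M·Γ·R·(√(d_V log(d_V d)/n) + √(log(2β)/n) + 2√(log(2/δ)/n))`. -/
theorem pilr_minimax_risk_bound :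
    ∃ C : ℝ, 0 < C ∧
      ∀ (n d dV : ℕ), 0 < n → 0 < d → 0 < dV → 3 ≤ dV * d →
      ∀ (β σ M η R Γ : ℝ), 1 ≤ β → 0 < σ → 0 < M → 0 < η → 0 < R → 1 < Γ →
      ∀ (Φ : Matrix (Fin n) (Fin d) ℝ),
      (∀ i, Real.sqrt (∑ j, (Φ i j) ^ 2) ≤ M) →
      (∀ w : Fin d → ℝ, Real.sqrt (∑ j, (w j) ^ 2) ≤ 2 * R →
        Real.sqrt η * Real.sqrt (∑ j, (w j) ^ 2)
          ≤ (1 / Real.sqrt n) * Real.sqrt (∑ i, (Φ.mulVec w i) ^ 2)) →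
      ∀ (VR : Set (Fin d → ℝ)), VR.Nonempty → IsCompact VR →
      VR ⊆ {w | Real.sqrt (∑ j, (w j) ^ 2) ≤ R} →
      (∀ ε' ∈ Set.Ioc (0 : ℝ) (2 * R), ∃ N : Finset (Fin d → ℝ),
        (↑N : Set (Fin d → ℝ)) ⊆ VR ∧
        (N.card : ℝ) ≤ 2 * β * (2 * R * dV * d / ε') ^ dV ∧
        ∀ w ∈ VR, ∃ v ∈ N, Real.sqrt (∑ j, (w j - v j) ^ 2) ≤ ε') →
      ∀ (Ω : Type) (_ : MeasurableSpace Ω) (μ : Measure Ω), IsProbabilityMeasure μ →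
      ∀ (ε : Fin n → Ω → ℝ), (∀ i, Measurable (ε i)) →
      ProbabilityTheory.iIndepFun ε μ →
      (∀ i, Measure.map (ε i) μ = ProbabilityTheory.gaussianReal 0 (Real.toNNReal (σ ^ 2))) →
      ∀ (what : (Fin d → ℝ) → Ω → (Fin d → ℝ)),
      (∀ wstar ∈ VR, ∀ ω, what wstar ω ∈ VR) →
      (∀ wstar ∈ VR, ∀ ω, ∀ w ∈ VR,
        ∑ i, (Φ.mulVec wstar i + ε i ω - Φ.mulVec (what wstar ω) i) ^ 2
          ≤ ∑ i, (Φ.mulVec wstar i + ε i ω - Φ.mulVec w i) ^ 2) →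
      (∀ w₁ ∈ VR, ∀ w₂ ∈ VR, ∀ ω,
        Real.sqrt (∑ j, (what w₁ ω j - what w₂ ω j) ^ 2)
          ≤ (Γ - 1) * Real.sqrt (∑ j, (w₁ j - w₂ j) ^ 2)) →
      ∀ δ ∈ Set.Ioo (0 : ℝ) 1,
        ENNReal.ofReal (1 - δ)
          ≤ μ {ω | ∀ wstar ∈ VR,
              ∑ j, (what wstar ω j - wstar j) ^ 2
                ≤ C * η⁻¹ * σ * M * Γ * R *
                  (Real.sqrt (dV * Real.log (dV * d) / n) +
                   Real.sqrt (Real.log (2 * β) / n) +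
                   2 * Real.sqrt (Real.log (2 / δ) / n))} := by
  refine ⟨8, by norm_num, ?_⟩
  intro n d dV hn hd hdV _ β σ M η R Γ hβ hσ hM hη hR hΓ Φ hrow hRE VR _ _ hVR _ Ω _ μ _ ε _
    hind hgauss what hwhat hmin _ δ ⟨hδ0, hδ1⟩
  have hd1 : (1 : ℝ) ≤ d := by exact_mod_cast hd
  have hdV1 : (1 : ℝ) ≤ dV := by exact_mod_cast hdV
  set L := log (2 * d / δ)
  have hL : 0 ≤ L := log_nonneg (by rw [le_div_iff₀ hδ0]; linarith)
  have hfail : 2 * Fintype.card (Fin d) * exp (-L) = δ := by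
    rw [Fintype.card_fin, exp_neg, exp_log (by positivity)]
    field_simp
  have hevent := ofReal_one_sub_le_measure_sum_sq_le_of_gaussian hind hgauss Φ hL
  rw [hfail, Real.coe_toNNReal _ (sq_nonneg σ)] at hevent
  refine hevent.trans (measure_mono fun ω hω wstar hwstar ↦ ?_)
  have hnoise : √(∑ j, (∑ i, Φ i j * ε i ω) ^ 2) ≤ √(2 * σ ^ 2 * (n * M ^ 2) * L) := by
    refine sqrt_le_sqrt (hω.trans ?_)
    have := sum_sum_sq_le_of_sqrt_sum_sq_le Φ hrow
    rw [Fintype.card_fin] at this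
    gcongr
  have hdist : √(∑ j, (what wstar ω j - wstar j) ^ 2) ≤ 2 * R := by
    have hwhat_le : √(∑ j, what wstar ω j ^ 2) ≤ R := hVR (hwhat wstar hwstar ω)
    have hwstar_le : √(∑ j, wstar j ^ 2) ≤ R := hVR hwstar
    linarith [sqrt_sum_sq_sub_le (what wstar ω) wstar]
  refine (sum_sq_le_of_basic_inequality Φ hη (by positivity) (hRE _ hdist)
    (sum_sq_mulVec_sub_le_of_le Φ (hmin wstar hwstar ω wstar hwstar)) hdist hnoise).trans ?_
  exact four_mul_sqrt_div_le hη hσ.le hM.le hR.le hΓ.le (by positivity)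
    (mul_nonneg (by positivity) (log_nonneg (one_le_mul_of_one_le_of_one_le hdV1 hd1)))
    (log_nonneg (by rw [le_div_iff₀ hδ0]; linarith)) (log_nonneg (by linarith))
    (sqrt_log_two_mul_div_le hd hdV hδ0 (by linarith))
end

section
/- Let n ≥ 2 be an integer, ν > 0, and let X₁, …, X_n be real-valued random variables on a probability space such that for every i and every t ≥ 0, P(X_i ≥ t) ≤ 2·exp(−(1/2)·min(t²/ν², t/ν)). Then for every t ≥ 0, P(max_{1 ≤ i ≤ n} X_i ≥ t) ≤ 2·exp(−(1/(3·log n))·min(t²/(2ν²), t/(2ν))). -/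
open MeasureTheory Real

/-!
Write `M = min (t²/ν², t/ν)` and `L = log n`, so that the claimed bound is `2·exp(−M/(6L))`.
If `M ≤ 6 L log 2` this bound is at least `1` and there is nothing to prove. Otherwise the union
bound gives `n · 2·exp(−M/2) = 2·exp(L − M/2)`, and `M > 6 L log 2` together with `L ≥ log 2`
forces `L − M/2 ≤ −M/(6L)`.
-/

section UnionBound

variable {ι Ω : Type*} [Nonempty ι]

lemma setOf_le_ciSup_eq_iUnion [Finite ι] (X : ι → Ω → ℝ) (t : ℝ) :
    {ω | t ≤ ⨆ i, X i ω} = ⋃ i, {ω | t ≤ X i ω} := by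
  ext ω
  simp only [Set.mem_ofPred_eq, Set.mem_iUnion]
  constructor
  · intro h
    obtain ⟨j, hj⟩ := exists_eq_ciSup_of_finite (f := fun i => X i ω)
    exact ⟨j, hj ▸ h⟩
  · rintro ⟨j, hj⟩
    exact hj.trans (le_ciSup (Finite.bddAbove_range fun i => X i ω) j)

lemma measure_le_ciSup_le_card_mul [Fintype ι] [MeasurableSpace Ω] (μ : Measure Ω) {X : ι → Ω → ℝ} {t p : ℝ}
    (h : ∀ i, μ {ω | t ≤ X i ω} ≤ ENNReal.ofReal p) :
    μ {ω | t ≤ ⨆ i, X i ω} ≤ ENNReal.ofReal (Fintype.card ι * p) := by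
  calc μ {ω | t ≤ ⨆ i, X i ω} ≤ ∑ i, μ {ω | t ≤ X i ω} := by
        rw [setOf_le_ciSup_eq_iUnion]; exact measure_iUnion_fintype_le μ _
    _ ≤ ∑ _i : ι, ENNReal.ofReal p := Finset.sum_le_sum fun i _ => h i
    _ = ENNReal.ofReal (Fintype.card ι * p) := by
        rw [Finset.sum_const, Finset.card_univ, nsmul_eq_mul,
          ENNReal.ofReal_mul (Nat.cast_nonneg _), ENNReal.ofReal_natCast]

end UnionBound

lemma one_le_two_mul_exp_neg {x : ℝ} (hx : x ≤ log 2) : 1 ≤ 2 * exp (-x) := by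
  have h := exp_le_exp.mpr (neg_le_neg hx)
  rw [exp_neg, exp_log two_pos] at h
  linarith

lemma le_half_sub_div_six_mul_of_log_two_le {L M : ℝ} (hL : log 2 ≤ L) (hM : 6 * L * log 2 < M) :
    L ≤ M / 2 - M / (6 * L) := by
  have hlog2 : 0.6931471803 < log 2 := log_two_gt_d9
  have hL0 : 0 < L := by linarith
  have h1 : L ≤ log 2 * (3 * L - 1) := by nlinarith
  have h2 : 6 * L * L ≤ M * (3 * L - 1) := by nlinarith
  rw [div_sub_div _ _ two_ne_zero (by positivity), le_div_iff₀ (by positivity)]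
  linarith

lemma natCast_mul_exp_neg_half_le {n : ℕ} (hn : 2 ≤ n) {M : ℝ}
    (hM : 6 * log n * log 2 < M) :
    n * exp (-(M / 2)) ≤ exp (-(M / (6 * log n))) := by
  have hlog : log 2 ≤ log n := log_le_log two_pos (by exact_mod_cast hn)
  calc (n : ℝ) * exp (-(M / 2)) = exp (log n - M / 2) := by
        rw [exp_sub, exp_log (by positivity), exp_neg, ← div_eq_mul_inv]
    _ ≤ exp (-(M / (6 * log n))) := by
        have := le_half_sub_div_six_mul_of_log_two_le hlog hM
        gcongr
        linarith

theorem maximum_of_subexponential_tail_bound_general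
    (n : ℕ) (hn : 2 ≤ n) (ν : ℝ)
    (Ω : Type*) [MeasurableSpace Ω] (μ : Measure Ω) [IsProbabilityMeasure μ]
    (X : Fin n → Ω → ℝ)
    (htail : ∀ i, ∀ t : ℝ, 0 ≤ t →
      μ {ω | t ≤ X i ω}
        ≤ ENNReal.ofReal (2 * Real.exp (-(1/2) * min (t ^ 2 / ν ^ 2) (t / ν)))) :
    ∀ t : ℝ, 0 ≤ t →
      μ {ω | t ≤ ⨆ i, X i ω}
        ≤ ENNReal.ofReal (2 * Real.exp (-(1 / (3 * Real.log n)) *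
            min (t ^ 2 / (2 * ν ^ 2)) (t / (2 * ν)))) := by
  intro t ht
  set M := min (t ^ 2 / ν ^ 2) (t / ν)
  have hlog : 0 < log n := log_pos (by exact_mod_cast hn)
  have hexponent : -(1 / (3 * log n)) * min (t ^ 2 / (2 * ν ^ 2)) (t / (2 * ν))
      = -(M / (6 * log n)) := by
    rw [show t ^ 2 / (2 * ν ^ 2) = t ^ 2 / ν ^ 2 / 2 by ring,
      show t / (2 * ν) = t / ν / 2 by ring, min_div_div_right zero_le_two]
    field_simp
    ring
  rw [hexponent]
  by_cases hsmall : M ≤ 6 * log n * log 2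
  · refine prob_le_one.trans ?_
    rw [← ENNReal.ofReal_one]
    exact ENNReal.ofReal_le_ofReal <| one_le_two_mul_exp_neg <| by
      rw [div_le_iff₀ (by positivity)]; linarith
  · have : Nonempty (Fin n) := ⟨⟨0, by omega⟩⟩
    refine (measure_le_ciSup_le_card_mul μ fun i => htail i t ht).trans ?_
    refine ENNReal.ofReal_le_ofReal ?_
    have := natCast_mul_exp_neg_half_le hn (not_le.mp hsmall)
    rw [Fintype.card_fin, show -(1 / 2) * M = -(M / 2) by ring]
    linarith

/-- If each `X_i` satisfies the sub-exponential tail bound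
`P(X_i ≥ t) ≤ 2·exp(−(1/2)·min(t²/ν², t/ν))`, then the maximum satisfies
`P(max_i X_i ≥ t) ≤ 2·exp(−(1/(3 log n))·min(t²/(2ν²), t/(2ν)))`. -/
theorem maximum_of_subexponential_tail_bound
    (n : ℕ) (hn : 2 ≤ n) (ν : ℝ) (hν : 0 < ν)
    (Ω : Type*) [MeasurableSpace Ω] (μ : Measure Ω) [IsProbabilityMeasure μ]
    (X : Fin n → Ω → ℝ)
    (htail : ∀ i, ∀ t : ℝ, 0 ≤ t →
      μ {ω | t ≤ X i ω}
        ≤ ENNReal.ofReal (2 * Real.exp (-(1/2) * min (t ^ 2 / ν ^ 2) (t / ν)))) :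
    ∀ t : ℝ, 0 ≤ t →
      μ {ω | t ≤ ⨆ i, X i ω}
        ≤ ENNReal.ofReal (2 * Real.exp (-(1 / (3 * Real.log n)) *
            min (t ^ 2 / (2 * ν ^ 2)) (t / (2 * ν)))) :=
  maximum_of_subexponential_tail_bound_general n hn ν Ω μ X htail
end

section
/- Let L ≥ 2 and k, m be positive integers, let R > 0, ε ≥ 0, M > 0, L_φ ≥ 0 with q := R·L_φ ≠ 1, and let φ : ℝ^k → ℝ^k be L_φ-Lipschitz with respect to the Euclidean norm and satisfy ‖φ(z)‖₂ ≤ M for all z ∈ ℝ^k. Let W₁, W'₁ ∈ ℝ^{k×m}; W_ℓ, W'_ℓ ∈ ℝ^{k×k} for 2 ≤ ℓ ≤ L−1; and W_L, W'_L ∈ ℝ^{1×k}; assume ‖W_ℓ‖_F ≤ R and ‖W_ℓ − W'_ℓ‖_F ≤ ε for all 1 ≤ ℓ ≤ L (Frobenius norm). Define f(x) = W_L·φ(W_{L−1}·φ(⋯·φ(W₁·x)⋯)) and f'(x) analogously with the primed matrices. Then for every x ∈ ℝ^m with ‖x‖₂ ≤ R, |f(x) − f'(x)| ≤ ε·(M·(q^{L−1}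 − 1)/(q − 1) + R·q^{L−1}). -/
/-- The Euclidean (`ℓ₂`) norm of a vector in `ℝ^k`. -/
noncomputable def l2Norm {k : ℕ} (v : Fin k → ℝ) : ℝ :=
  Real.sqrt (∑ i, (v i) ^ 2)

/-- The Frobenius norm of a matrix (the Euclidean norm of its entries). -/
noncomputable def frobNorm {r k : ℕ} (W : Matrix (Fin r) (Fin k) ℝ) : ℝ :=
  Real.sqrt (∑ i, ∑ j, (W i j) ^ 2)

/-- Pre-activations of the network: `netPreact φ W₁ Wmid x j` is the
pre-activation `h_{j+1}` of layer `j+1`, i.e. `h₁ = W₁x` and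
`h_{ℓ} = W_ℓ·φ(h_{ℓ−1})` for `ℓ ≥ 2`. -/
noncomputable def netPreact {k m : ℕ} (φ : (Fin k → ℝ) → Fin k → ℝ)
    (W1 : Matrix (Fin k) (Fin m) ℝ) (Wmid : ℕ → Matrix (Fin k) (Fin k) ℝ)
    (x : Fin m → ℝ) : ℕ → (Fin k → ℝ)
  | 0 => W1.mulVec x
  | j + 1 => (Wmid (j + 2)).mulVec (φ (netPreact φ W1 Wmid x j))

/-- The scalar output of the depth-`L` network
`f(x) = W_L·φ(W_{L−1}·φ(⋯·φ(W₁·x)⋯))` (no activation after the final layer). -/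
noncomputable def netOutput {k m : ℕ} (L : ℕ) (φ : (Fin k → ℝ) → Fin k → ℝ)
    (W1 : Matrix (Fin k) (Fin m) ℝ) (Wmid : ℕ → Matrix (Fin k) (Fin k) ℝ)
    (WL : Matrix (Fin 1) (Fin k) ℝ) (x : Fin m → ℝ) : ℝ :=
  WL.mulVec (φ (netPreact φ W1 Wmid x (L - 2))) 0


lemma l2Norm_nonneg {k : ℕ} (v : Fin k → ℝ) : 0 ≤ l2Norm v := Real.sqrt_nonneg _

lemma l2Norm_eq_norm {k : ℕ} (v : Fin k → ℝ) :
    l2Norm v = ‖(WithLp.equiv 2 (Fin k → ℝ)).symm v‖ := by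
  rw [EuclideanSpace.norm_eq]
  simp [l2Norm, Real.norm_eq_abs, sq_abs]

lemma l2Norm_add_le {k : ℕ} (u v : Fin k → ℝ) :
    l2Norm (u + v) ≤ l2Norm u + l2Norm v := by
  simp only [l2Norm_eq_norm]
  rw [show (WithLp.equiv 2 (Fin k → ℝ)).symm (u + v)
      = (WithLp.equiv 2 (Fin k → ℝ)).symm u + (WithLp.equiv 2 (Fin k → ℝ)).symm v from rfl]
  exact norm_add_le _ _

lemma l2Norm_mulVec_le {r k : ℕ} (W : Matrix (Fin r) (Fin k) ℝ) (v : Fin k → ℝ) :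
    l2Norm (W.mulVec v) ≤ frobNorm W * l2Norm v := by
  rw [l2Norm, frobNorm, l2Norm, ← Real.sqrt_mul (by positivity), Finset.sum_mul]
  apply Real.sqrt_le_sqrt
  apply Finset.sum_le_sum
  intro i _
  simpa [Matrix.mulVec, dotProduct] using
    Finset.sum_mul_sq_le_sq_mul_sq Finset.univ (fun j => W i j) v

lemma layer_step {r k : ℕ} (A A' : Matrix (Fin r) (Fin k) ℝ) (u u' : Fin k → ℝ) :
    l2Norm (A.mulVec u - A'.mulVec u')
      ≤ frobNorm (A - A') * l2Norm u + frobNorm A' * l2Norm (u - u') := by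
  have hdec : A.mulVec u - A'.mulVec u'
      = (A - A').mulVec u + A'.mulVec (u - u') := by
    rw [Matrix.sub_mulVec, Matrix.mulVec_sub]
    abel
  rw [hdec]
  exact le_trans (l2Norm_add_le _ _)
    (add_le_add (l2Norm_mulVec_le _ _) (l2Norm_mulVec_le _ _))

lemma abs_apply_le_l2Norm (v : Fin 1 → ℝ) : |v 0| ≤ l2Norm v := by
  rw [l2Norm, Fin.sum_univ_one, Real.sqrt_sq_eq_abs]

/-- Stability of deep networks with a bounded Lipschitz
activation: if all layer matrices have Frobenius norm at most `R` and the
corresponding layers of the two networks differ by at most `ε` in Frobenius norm,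
`φ` is `L_φ`-Lipschitz with `‖φ(z)‖₂ ≤ M`, and `q = R·L_φ ≠ 1`, then for every
input `x` with `‖x‖₂ ≤ R`,
`|f(x) − f'(x)| ≤ ε·(M·(q^{L−1} − 1)/(q − 1) + R·q^{L−1})`. -/
theorem deep_network_covering_stability_bound
    (L k m : ℕ) (hL : 2 ≤ L) (hk : 0 < k) (hm : 0 < m)
    (R ε M Lφ : ℝ) (hR : 0 < R) (hε : 0 ≤ ε) (hM : 0 < M) (hLφ : 0 ≤ Lφ)
    (hq : R * Lφ ≠ 1)
    (φ : (Fin k → ℝ) → Fin k → ℝ)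
    (hlip : ∀ z₁ z₂ : Fin k → ℝ, l2Norm (φ z₁ - φ z₂) ≤ Lφ * l2Norm (z₁ - z₂))
    (hbdd : ∀ z : Fin k → ℝ, l2Norm (φ z) ≤ M)
    (W1 W1' : Matrix (Fin k) (Fin m) ℝ)
    (Wmid Wmid' : ℕ → Matrix (Fin k) (Fin k) ℝ)
    (WL WL' : Matrix (Fin 1) (Fin k) ℝ)
    (hW1 : frobNorm W1 ≤ R) (hW1' : frobNorm W1' ≤ R)
    (hWmid : ∀ ℓ, 2 ≤ ℓ → ℓ ≤ L - 1 → frobNorm (Wmid ℓ) ≤ R)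
    (hWmid' : ∀ ℓ, 2 ≤ ℓ → ℓ ≤ L - 1 → frobNorm (Wmid' ℓ) ≤ R)
    (hWL : frobNorm WL ≤ R) (hWL' : frobNorm WL' ≤ R)
    (hdW1 : frobNorm (W1 - W1') ≤ ε)
    (hdWmid : ∀ ℓ, 2 ≤ ℓ → ℓ ≤ L - 1 → frobNorm (Wmid ℓ - Wmid' ℓ) ≤ ε)
    (hdWL : frobNorm (WL - WL') ≤ ε) :
    ∀ x : Fin m → ℝ, l2Norm x ≤ R →
      |netOutput L φ W1 Wmid WL x - netOutput L φ W1' Wmid' WL' x|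
        ≤ ε * (M * ((R * Lφ) ^ (L - 1) - 1) / (R * Lφ - 1)
            + R * (R * Lφ) ^ (L - 1)) := by
  intro x hx
  set q : ℝ := R * Lφ with hqdef
  have hq0 : 0 ≤ q := by positivity
  -- generic one-layer difference bound
  have step : ∀ (r : ℕ) (A A' : Matrix (Fin r) (Fin k) ℝ) (h h' : Fin k → ℝ),
      frobNorm (A - A') ≤ ε → frobNorm A' ≤ R →
      l2Norm (A.mulVec (φ h) - A'.mulVec (φ h'))
        ≤ ε * M + q * l2Norm (h - h') := by
    intro r A A' h h' hd hA'
    refine le_trans (layer_step A A' (φ h) (φ h')) ?_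
    have h1 : frobNorm (A - A') * l2Norm (φ h) ≤ ε * M :=
      mul_le_mul hd (hbdd h) (l2Norm_nonneg _) hε
    have h2 : frobNorm A' * l2Norm (φ h - φ h') ≤ R * (Lφ * l2Norm (h - h')) :=
      mul_le_mul hA' (hlip h h') (l2Norm_nonneg _) hR.le
    calc frobNorm (A - A') * l2Norm (φ h) + frobNorm A' * l2Norm (φ h - φ h')
        ≤ ε * M + R * (Lφ * l2Norm (h - h')) := add_le_add h1 h2
      _ = ε * M + q * l2Norm (h - h') := by rw [hqdef]; ring
  -- recursion bound on pre-activations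
  have key : ∀ j, j ≤ L - 2 →
      l2Norm (netPreact φ W1 Wmid x j - netPreact φ W1' Wmid' x j)
        ≤ ε * (R * q ^ j + M * ∑ i ∈ Finset.range j, q ^ i) := by
    intro j
    induction j with
    | zero =>
      intro _
      show l2Norm (W1.mulVec x - W1'.mulVec x) ≤ _
      rw [← Matrix.sub_mulVec]
      calc l2Norm ((W1 - W1').mulVec x)
          ≤ frobNorm (W1 - W1') * l2Norm x := l2Norm_mulVec_le _ _
        _ ≤ ε * R := mul_le_mul hdW1 hx (l2Norm_nonneg _) hε
        _ = ε * (R * q ^ 0 + M * ∑ i ∈ Finset.range 0, q ^ i) := by simp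
    | succ j ih =>
      intro hj
      have ha := ih (by omega)
      have hstep := step k (Wmid (j + 2)) (Wmid' (j + 2))
        (netPreact φ W1 Wmid x j) (netPreact φ W1' Wmid' x j)
        (hdWmid (j + 2) (by omega) (by omega)) (hWmid' (j + 2) (by omega) (by omega))
      calc l2Norm (netPreact φ W1 Wmid x (j + 1) - netPreact φ W1' Wmid' x (j + 1))
          ≤ ε * M + q * l2Norm (netPreact φ W1 Wmid x j - netPreact φ W1' Wmid' x j) :=
            hstep
        _ ≤ ε * M + q * (ε * (R * q ^ j + M * ∑ i ∈ Finset.range j, q ^ i)) := by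
            have := mul_le_mul_of_nonneg_left ha hq0
            linarith
        _ = ε * (R * q ^ (j + 1) + M * ∑ i ∈ Finset.range (j + 1), q ^ i) := by
            rw [geom_sum_succ, pow_succ]
            ring
  -- final layer
  have ha := key (L - 2) le_rfl
  have hstep := step 1 WL WL'
    (netPreact φ W1 Wmid x (L - 2)) (netPreact φ W1' Wmid' x (L - 2)) hdWL hWL'
  have hL1 : L - 1 = (L - 2) + 1 := by omega
  have heq : netOutput L φ W1 Wmid WL x - netOutput L φ W1' Wmid' WL' x
      = (WL.mulVec (φ (netPreact φ W1 Wmid x (L - 2)))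
          - WL'.mulVec (φ (netPreact φ W1' Wmid' x (L - 2)))) 0 := rfl
  rw [heq]
  calc |(WL.mulVec (φ (netPreact φ W1 Wmid x (L - 2)))
          - WL'.mulVec (φ (netPreact φ W1' Wmid' x (L - 2)))) 0|
      ≤ l2Norm (WL.mulVec (φ (netPreact φ W1 Wmid x (L - 2)))
          - WL'.mulVec (φ (netPreact φ W1' Wmid' x (L - 2)))) := abs_apply_le_l2Norm _
    _ ≤ ε * M + q * l2Norm (netPreact φ W1 Wmid x (L - 2)
          - netPreact φ W1' Wmid' x (L - 2)) := hstep
    _ ≤ ε * M + q * (ε * (R * q ^ (L - 2) + M * ∑ i ∈ Finset.range (L - 2), q ^ i)) := by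
        have := mul_le_mul_of_nonneg_left ha hq0
        linarith
    _ = ε * (M * (q ^ (L - 1) - 1) / (q - 1) + R * q ^ (L - 1)) := by
        rw [mul_div_assoc, ← geom_sum_eq hq (L - 1), hL1, geom_sum_succ, pow_succ]
        ring
end
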